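/- For x in (0,1), the function κ(x) = (1−x)^{c−a−b} ₂F₁(c−a, c−b; c−a−b+1; 1−x) satisfies the hypergeometric differential equation x(1−x)κ''(x) + (c − (a+b+1)x)κ'(x) − ab κ(x) = 0. -/

import Mathlib

/-!
Substituting `y = 1 - x` turns the hypergeometric equation with parameters `(a, b; c)` into the
one with parameters `(a, b; a + b + 1 - c)`, and if `F` solves the equation with parameters
`(A, B; μ + 1)` then `y ^ μ * F y` solves the one with parameters `(A - μ, B - μ; 1 - μ)`.
With `A = c - a`, `B = c - b`, `μ = c - a - b` it remains that `₂F₁(A, B; μ + 1; ·)` solves its own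
equation on the unit disc; after termwise differentiation this is the recurrence
`(n + 1) (n + μ + 1) tₙ₊₁ = (n + A) (n + B) tₙ` of its coefficients.
-/

open Complex

/-- The Gauss hypergeometric series `₂F₁(a,b;c;x)`. -/
noncomputable def hyp (a b c x : ℂ) : ℂ :=
  ∑' n : ℕ, ((ascPochhammer ℂ n).eval a * (ascPochhammer ℂ n).eval b /
    ((ascPochhammer ℂ n).eval c * (n.factorial : ℂ))) * x ^ n

open Filter Topology Metric

def SummableOnUnitDisc (v : ℕ → ℂ) : Prop :=
  ∀ r : ℝ, 0 ≤ r → r < 1 → Summable fun n => ‖v n‖ * r ^ n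

def derivCoeff (v : ℕ → ℂ) (n : ℕ) : ℂ := (n + 1) * v (n + 1)

noncomputable def hypergeometricOp (a b c : ℂ) (f : ℂ → ℂ) (z : ℂ) : ℂ :=
  z * (1 - z) * deriv (deriv f) z + (c - (a + b + 1) * z) * deriv f z - a * b * f z

namespace SummableOnUnitDisc

variable {v : ℕ → ℂ} {z : ℂ}

theorem summable_mul_pow (hv : SummableOnUnitDisc v) (hz : ‖z‖ < 1) :
    Summable fun n => v n * z ^ n :=
  .of_norm <| by simpa only [norm_mul, norm_pow] using hv ‖z‖ (norm_nonneg z) hz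

theorem derivCoeff (hv : SummableOnUnitDisc v) : SummableOnUnitDisc (derivCoeff v) := by
  intro r hr0 hr1
  obtain ⟨s, hrs, hs1⟩ := exists_between hr1
  have hs0 : 0 < s := hr0.trans_lt hrs
  have hq0 : 0 ≤ r / s := by positivity
  have hq1 : r / s < 1 := (div_lt_one hs0).mpr hrs
  have hfactor : ∀ᶠ n : ℕ in atTop, ((n : ℝ) + 1) * (r / s) ^ n ≤ s := by
    have h := (tendsto_self_mul_const_pow_of_lt_one hq0 hq1).add
      (tendsto_pow_atTop_nhds_zero_of_lt_one hq0 hq1)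
    rw [zero_add] at h
    refine (h.eventually_le_const hs0).mono fun n hn => ?_
    linarith
  refine Summable.of_norm_bounded_eventually_nat
    ((summable_nat_add_iff 1).mpr (hv s hs0.le hs1)) ?_
  filter_upwards [hfactor] with n hn
  have hcast : ‖(n : ℂ) + 1‖ = n + 1 := by exact_mod_cast Complex.norm_natCast (n + 1)
  rw [norm_mul, norm_norm, _root_.derivCoeff, norm_mul, hcast, norm_pow, Real.norm_of_nonneg hr0]
  calc ((n : ℝ) + 1) * ‖v (n + 1)‖ * r ^ n
      = ((n + 1) * (r / s) ^ n) * (‖v (n + 1)‖ * s ^ n) := by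
        rw [div_pow]; field_simp
    _ ≤ s * (‖v (n + 1)‖ * s ^ n) := by gcongr
    _ = ‖v (n + 1)‖ * s ^ (n + 1) := by ring

theorem hasDerivAt_tsum_mul_pow (hv : SummableOnUnitDisc v) (hz : ‖z‖ < 1) :
    HasDerivAt (fun w => ∑' n, v n * w ^ n) (∑' n, _root_.derivCoeff v n * z ^ n) z := by
  obtain ⟨r, hzr, hr1⟩ := exists_between hz
  have hzball : z ∈ ball (0 : ℂ) r := mem_ball_zero_iff.mpr hzr
  have hdiff (n : ℕ) : DifferentiableOn ℂ (fun w => v n * w ^ n) (ball 0 r) := by fun_prop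
  have hbound (n : ℕ) (w : ℂ) (hw : w ∈ ball (0 : ℂ) r) : ‖v n * w ^ n‖ ≤ ‖v n‖ * r ^ n := by
    rw [norm_mul, norm_pow]
    gcongr
    exact (mem_ball_zero_iff.mp hw).le
  have hsumm := hv r ((norm_nonneg z).trans hzr.le) hr1
  have hF := ((differentiableOn_tsum_of_summable_norm hsumm hdiff isOpen_ball hbound
    ).differentiableAt (isOpen_ball.mem_nhds hzball)).hasDerivAt
  suffices h : HasSum (fun n => _root_.derivCoeff v n * z ^ n)
      (deriv (fun w => ∑' n, v n * w ^ n) z) by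
    rwa [h.tsum_eq]
  have hsum := hasSum_deriv_of_summable_norm hsumm hdiff isOpen_ball hbound hzball
  simp only [deriv_const_mul_field'] at hsum
  simpa [_root_.derivCoeff, mul_comm, mul_assoc] using (hasSum_nat_add_iff' 1).mpr hsum

theorem differentiableOn_tsum_mul_pow (hv : SummableOnUnitDisc v) :
    DifferentiableOn ℂ (fun w => ∑' n, v n * w ^ n) (ball 0 1) := fun _ hw =>
  (hv.hasDerivAt_tsum_mul_pow (mem_ball_zero_iff.mp hw)).differentiableAt.differentiableWithinAt

theorem deriv_deriv_tsum_mul_pow (hv : SummableOnUnitDisc v) (hz : ‖z‖ < 1) :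
    deriv (deriv fun w => ∑' n, v n * w ^ n) z
      = ∑' n, _root_.derivCoeff (_root_.derivCoeff v) n * z ^ n := by
  have hderiv : deriv (fun w => ∑' n, v n * w ^ n) =ᶠ[𝓝 z]
      fun w => ∑' n, _root_.derivCoeff v n * w ^ n := by
    filter_upwards [isOpen_ball.mem_nhds (mem_ball_zero_iff.mpr hz)] with w hw
    exact (hv.hasDerivAt_tsum_mul_pow (mem_ball_zero_iff.mp hw)).deriv
  rw [hderiv.deriv_eq]
  exact (hv.derivCoeff.hasDerivAt_tsum_mul_pow hz).deriv

end SummableOnUnitDisc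

theorem HasSum.mul_left_of_shift {u : ℕ → ℂ} {z s : ℂ} (h0 : u 0 = 0)
    (h : HasSum (fun n => u (n + 1) * z ^ n) s) : HasSum (fun n => u n * z ^ n) (z * s) := by
  rw [← hasSum_nat_add_iff' 1]
  simpa [h0, pow_succ', mul_assoc, mul_left_comm] using h.mul_left z

theorem hypergeometricOp_tsum_mul_pow_eq_zero {a b c z : ℂ} {v : ℕ → ℂ}
    (hv : SummableOnUnitDisc v)
    (hrec : ∀ n : ℕ, (n + 1) * (n + c) * v (n + 1) = (n + a) * (n + b) * v n) (hz : ‖z‖ < 1) :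
    hypergeometricOp a b c (fun w => ∑' n, v n * w ^ n) z = 0 := by
  have s0 := (hv.summable_mul_pow hz).hasSum
  have s1 := (hv.hasDerivAt_tsum_mul_pow hz).deriv ▸ (hv.derivCoeff.summable_mul_pow hz).hasSum
  have s2 :=
    (hv.deriv_deriv_tsum_mul_pow hz) ▸ (hv.derivCoeff.derivCoeff.summable_mul_pow hz).hasSum
  have zs1 : HasSum (fun n => n * v n * z ^ n) (z * deriv (fun w => ∑' n, v n * w ^ n) z) :=
    .mul_left_of_shift (by simp) (by simpa [derivCoeff] using s1)
  have zs2 : HasSum (fun n => n * derivCoeff v n * z ^ n)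
      (z * deriv (deriv fun w => ∑' n, v n * w ^ n) z) :=
    .mul_left_of_shift (by simp) (by simpa [derivCoeff] using s2)
  have zzs2 : HasSum (fun n => n * (n - 1) * v n * z ^ n)
      (z * (z * deriv (deriv fun w => ∑' n, v n * w ^ n) z)) :=
    .mul_left_of_shift (by simp) (by simpa [derivCoeff, mul_assoc, mul_left_comm] using zs2)
  have key := (zs2.add (s1.mul_left c)).sub ((zzs2.add (zs1.mul_left (a + b + 1))).add
    (s0.mul_left (a * b)))
  have hvanish := key.unique <| by
    convert hasSum_zero with n
    simp only [derivCoeff]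
    linear_combination z ^ n * hrec n
  unfold hypergeometricOp
  linear_combination hvanish

theorem ordinaryHypergeometricCoefficient_succ {𝕂 : Type*} [Field 𝕂] [CharZero 𝕂] {a b c : 𝕂}
    (hc : ∀ k : ℕ, (k : 𝕂) ≠ -c) (n : ℕ) :
    (n + 1) * (n + c) * ordinaryHypergeometricCoefficient a b c (n + 1)
      = (n + a) * (n + b) * ordinaryHypergeometricCoefficient a b c n := by
  have hpoch : (ascPochhammer 𝕂 n).eval c ≠ 0 := by
    rw [Ne, ascPochhammer_eval_eq_zero_iff]
    exact fun ⟨k, _, hk⟩ => hc k hk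
  have hcn : c + n ≠ 0 := fun h => hc n (eq_neg_of_add_eq_zero_right h)
  have hn : (n : 𝕂) + 1 ≠ 0 := by exact_mod_cast n.succ_ne_zero
  have hfact : (n.factorial : 𝕂) ≠ 0 := by exact_mod_cast n.factorial_ne_zero
  simp only [ordinaryHypergeometricCoefficient, ascPochhammer_succ_eval, Nat.factorial_succ]
  push_cast
  field_simp
  ring

theorem one_le_radius_ordinaryHypergeometricSeries {𝕂 𝔸 : Type*} [RCLike 𝕂]
    [NormedDivisionRing 𝔸] [NormedAlgebra 𝕂 𝔸] {a b c : 𝕂} (hc : ∀ k : ℕ, (k : 𝕂) ≠ -c) :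
    1 ≤ (ordinaryHypergeometricSeries 𝔸 a b c).radius := by
  by_cases ha : ∃ k : ℕ, (k : 𝕂) = -a
  · obtain ⟨k, hk⟩ := ha
    rw [← neg_neg a, ← hk, ordinaryHypergeometric_radius_top_of_neg_nat₁]
    exact le_top
  by_cases hb : ∃ k : ℕ, (k : 𝕂) = -b
  · obtain ⟨k, hk⟩ := hb
    rw [← neg_neg b, ← hk, ordinaryHypergeometric_radius_top_of_neg_nat₂]
    exact le_top
  simp only [not_exists] at ha hb
  rw [ordinaryHypergeometricSeries_radius_eq_one _ _ _ _ fun k => ⟨ha k, hb k, hc k⟩]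

theorem summableOnUnitDisc_ordinaryHypergeometricCoefficient {a b c : ℂ}
    (hc : ∀ k : ℕ, (k : ℂ) ≠ -c) :
    SummableOnUnitDisc (ordinaryHypergeometricCoefficient a b c) := fun r hr0 hr1 => by
  lift r to NNReal using hr0
  have hr : (r : ENNReal) < (ordinaryHypergeometricSeries ℂ a b c).radius :=
    (ENNReal.coe_lt_one_iff.mpr (mod_cast hr1)).trans_le
      (one_le_radius_ordinaryHypergeometricSeries hc)
  simpa [ordinaryHypergeometricSeries, FormalMultilinearSeries.ofScalars_norm] using
    (ordinaryHypergeometricSeries ℂ a b c).summable_norm_mul_pow hr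

theorem hyp_eq_tsum (a b c : ℂ) :
    hyp a b c = fun z => ∑' n, ordinaryHypergeometricCoefficient a b c n * z ^ n := by
  funext z
  refine tsum_congr fun n => ?_
  ring

theorem differentiableOn_hyp {a b c : ℂ} (hc : ∀ k : ℕ, (k : ℂ) ≠ -c) :
    DifferentiableOn ℂ (hyp a b c) (ball 0 1) := by
  rw [hyp_eq_tsum]
  exact (summableOnUnitDisc_ordinaryHypergeometricCoefficient hc).differentiableOn_tsum_mul_pow

theorem hypergeometricOp_hyp {a b c z : ℂ} (hc : ∀ k : ℕ, (k : ℂ) ≠ -c) (hz : ‖z‖ < 1) :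
    hypergeometricOp a b c (hyp a b c) z = 0 := by
  rw [hyp_eq_tsum]
  exact hypergeometricOp_tsum_mul_pow_eq_zero
    (summableOnUnitDisc_ordinaryHypergeometricCoefficient hc)
    (ordinaryHypergeometricCoefficient_succ hc) hz

theorem hypergeometricOp_cpow_mul {A B μ y : ℂ} {F : ℂ → ℂ} {U : Set ℂ} (hU : IsOpen U)
    (hUs : U ⊆ slitPlane) (hF : DifferentiableOn ℂ F U) (hy : y ∈ U)
    (hFy : hypergeometricOp A B (μ + 1) F y = 0) :
    hypergeometricOp (A - μ) (B - μ) (1 - μ) (fun w => w ^ μ * F w) y = 0 := by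
  have hasDerivAt_cpow (ν : ℂ) {w : ℂ} (hw : w ∈ U) :
      HasDerivAt (fun w => w ^ ν) (ν * w ^ (ν - 1)) w :=
    (hasStrictDerivAt_cpow_const (hUs hw)).hasDerivAt
  have hasDerivAt_F {w : ℂ} (hw : w ∈ U) : HasDerivAt F (deriv F w) w :=
    (hF.differentiableAt (hU.mem_nhds hw)).hasDerivAt
  have hderiv : deriv (fun w => w ^ μ * F w) =ᶠ[𝓝 y]
      fun w => μ * w ^ (μ - 1) * F w + w ^ μ * deriv F w := by
    filter_upwards [hU.mem_nhds hy] with w hw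
    exact ((hasDerivAt_cpow μ hw).mul (hasDerivAt_F hw)).deriv
  have hderiv2 := (((hasDerivAt_cpow (μ - 1) hy).const_mul μ).fun_mul (hasDerivAt_F hy)).fun_add
    ((hasDerivAt_cpow μ hy).fun_mul ((hF.deriv hU).differentiableAt (hU.mem_nhds hy)).hasDerivAt)
  have hy0 : y ≠ 0 := slitPlane_ne_zero (hUs hy)
  have hpow_succ (ν : ℂ) : y ^ (ν + 1) = y ^ ν * y := by rw [cpow_add _ _ hy0, cpow_one]
  have hpow1 : y ^ (μ - 1) = y ^ (μ - 1 - 1) * y := by rw [← hpow_succ, sub_add_cancel]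
  have hpow0 : y ^ μ = y ^ (μ - 1) * y := by rw [← hpow_succ, sub_add_cancel]
  unfold hypergeometricOp at hFy ⊢
  rw [hderiv.deriv_eq, hderiv2.deriv, hderiv.eq_of_nhds]
  beta_reduce
  rw [hpow0, hpow1]
  linear_combination y ^ (μ - 1 - 1) * y * y * hFy

theorem deriv_comp_one_sub_ofReal {G : ℂ → ℂ} {t : ℝ} (hG : DifferentiableAt ℂ G (1 - t)) :
    deriv (fun s : ℝ => G (1 - s)) t = -deriv G (1 - t) :=
  (hG.hasDerivAt.comp_const_sub 1 (t : ℂ)).comp_ofReal.deriv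

theorem hypergeometricOp_comp_one_sub {a b c : ℂ} {G : ℂ → ℂ} {U : Set ℂ} (hU : IsOpen U)
    (hG : DifferentiableOn ℂ G U) {x : ℝ} (hx : 1 - (x : ℂ) ∈ U) :
    (x : ℂ) * (1 - x) * deriv (deriv fun t : ℝ => G (1 - t)) x
        + (c - (a + b + 1) * x) * deriv (fun t : ℝ => G (1 - t)) x - a * b * G (1 - x)
      = hypergeometricOp a b (a + b + 1 - c) G (1 - x) := by
  have hnear : ∀ᶠ t : ℝ in 𝓝 x, 1 - (t : ℂ) ∈ U :=
    (continuous_const.sub continuous_ofReal).continuousAt.preimage_mem_nhds (hU.mem_nhds hx)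
  have hderiv : deriv (fun t : ℝ => G (1 - t)) =ᶠ[𝓝 x] fun t : ℝ => -deriv G (1 - t) := by
    filter_upwards [hnear] with t ht
    exact deriv_comp_one_sub_ofReal (hG.differentiableAt (hU.mem_nhds ht))
  rw [hderiv.deriv_eq, deriv.fun_neg, hderiv.eq_of_nhds,
    deriv_comp_one_sub_ofReal ((hG.deriv hU).differentiableAt (hU.mem_nhds hx))]
  unfold hypergeometricOp
  ring

/--  solves the hypergeometric ODE on . -/
theorem second_solution_at_one_solves_ODE (a b c : ℂ) (hcab : ∀ k : ℤ, c - a - b ≠ (k : ℂ))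
    (x : ℝ) (hx : x ∈ Set.Ioo (0 : ℝ) 1) :
    (x : ℂ) * (1 - (x : ℂ)) *
        deriv (deriv (fun t : ℝ =>
          ((1 : ℂ) - t) ^ (c - a - b) * hyp (c - a) (c - b) (c - a - b + 1) (1 - t))) x
      + (c - (a + b + 1) * (x : ℂ)) *
        deriv (fun t : ℝ =>
          ((1 : ℂ) - t) ^ (c - a - b) * hyp (c - a) (c - b) (c - a - b + 1) (1 - t)) x
      - a * b * (((1 : ℂ) - x) ^ (c - a - b) * hyp (c - a) (c - b) (c - a - b + 1) (1 - x)) = 0 := by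
  set U := ball (0 : ℂ) 1 ∩ slitPlane
  have hU : IsOpen U := isOpen_ball.inter isOpen_slitPlane
  have hxU : 1 - (x : ℂ) ∈ U := by
    rw [← ofReal_one, ← ofReal_sub, Set.mem_inter_iff, mem_ball_zero_iff, norm_real,
      Real.norm_of_nonneg (by linarith [hx.2]), ofReal_mem_slitPlane]
    constructor <;> linarith [hx.1, hx.2]
  have hC : ∀ k : ℕ, (k : ℂ) ≠ -(c - a - b + 1) := fun k hk =>
    hcab (-(k + 1)) (by push_cast; linear_combination hk)
  have hF : DifferentiableOn ℂ (hyp (c - a) (c - b) (c - a - b + 1)) U :=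
    (differentiableOn_hyp hC).mono Set.inter_subset_left
  have hG :
      DifferentiableOn ℂ (fun w => w ^ (c - a - b) * hyp (c - a) (c - b) (c - a - b + 1) w) U :=
    (differentiableOn_id.cpow_const fun _ hw => hw.2).mul hF
  have hode := hypergeometricOp_cpow_mul hU Set.inter_subset_right hF hxU
    (hypergeometricOp_hyp hC (mem_ball_zero_iff.mp hxU.1))
  rw [hypergeometricOp_comp_one_sub hU hG hxU]
  unfold hypergeometricOp at hode ⊢
  linear_combination hode
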